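/- For every (ℓ−1)×(ℓ−1) real matrix A, ‖A‖² + Tr(A²) − (2/(ℓ−1))(Tr A)² ≥ 0, where ‖A‖² = ∑_{i,j} a_{ij}². -/
import Mathlib


/-- For every `(ℓ−1)×(ℓ−1)` real matrix `A` (with `n = ℓ−1 ≥ 1`),
`‖A‖² + Tr(A²) − (2/(ℓ−1)) (Tr A)² ≥ 0`, where `‖A‖²` is the squared Frobenius
norm `∑_{i,j} A i j ^ 2`. -/
theorem frobenius_add_trace_sq_inequality
    {n : ℕ} (hn : 1 ≤ n) (A : Matrix (Fin n) (Fin n) ℝ) :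
    0 ≤ (∑ i, ∑ j, A i j ^ 2) + (A * A).trace - (2 / (n : ℝ)) * A.trace ^ 2 := by
  have hn0 : (0:ℝ) < (n:ℝ) := by exact_mod_cast hn
  set B : Matrix (Fin n) (Fin n) ℝ := fun i j => A i j + A j i with hB
  have h1 : (∑ i, B i i) ^ 2 ≤ (n:ℝ) * ∑ i, B i i ^ 2 := by
    have := sq_sum_le_card_mul_sum_sq (s := (Finset.univ : Finset (Fin n)))
      (f := fun i => B i i)
    simpa using this
  have h2 : (∑ i, B i i ^ 2) ≤ ∑ i, ∑ j, B i j ^ 2 := by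
    apply Finset.sum_le_sum
    intro i _
    exact Finset.single_le_sum (f := fun j => B i j ^ 2) (fun j _ => sq_nonneg _)
      (Finset.mem_univ i)
  have h3 : (∑ i, B i i) ^ 2 ≤ (n:ℝ) * ∑ i, ∑ j, B i j ^ 2 :=
    h1.trans (by nlinarith [h2])
  have trA : A.trace = (∑ i, B i i) / 2 := by
    simp only [Matrix.trace, Matrix.diag, hB]
    rw [Finset.sum_div]
    apply Finset.sum_congr rfl
    intro i _; ring
  have trAA : (A * A).trace = ∑ i, ∑ j, A i j * A j i := by
    simp [Matrix.trace, Matrix.diag, Matrix.mul_apply]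
  have key : ∑ i, ∑ j, B i j ^ 2
      = 2 * ((∑ i, ∑ j, A i j ^ 2) + (A * A).trace) := by
    rw [trAA]
    calc ∑ i, ∑ j, B i j ^ 2
        = ∑ i, ∑ j, (A i j ^ 2 + A j i ^ 2 + 2 * (A i j * A j i)) := by
          apply Finset.sum_congr rfl; intro i _
          apply Finset.sum_congr rfl; intro j _
          simp only [hB]; ring
      _ = (∑ i, ∑ j, A i j ^ 2) + (∑ i, ∑ j, A j i ^ 2)
            + 2 * ∑ i, ∑ j, A i j * A j i := by
          simp [Finset.sum_add_distrib, Finset.mul_sum]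
      _ = (∑ i, ∑ j, A i j ^ 2) + (∑ i, ∑ j, A i j ^ 2)
            + 2 * ∑ i, ∑ j, A i j * A j i := by
          rw [Finset.sum_comm (f := fun i j => A j i ^ 2)]
      _ = 2 * ((∑ i, ∑ j, A i j ^ 2) + ∑ i, ∑ j, A i j * A j i) := by ring
  rw [trA, sub_nonneg, div_mul_eq_mul_div, div_le_iff₀ hn0]
  nlinarith [h3, key]
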